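/- arXiv:2201.07553 — 2 statements merged into one kernel-verified Lean document; each statement's English description precedes it below -/
import Mathlib

section
/- Let G be a group of order n and let P be an (n, mk, σ, μ)-partial difference set with σ ≠ μ that is partitioned by a collection S' = {D₁, …, D_m} of m pairwise disjoint k-subsets of G*. Then S' is an (n, m, k, λ)-external difference family if and only if S' is a proper (n, m, k, σ−λ, μ−λ)-disjoint partial difference family. -/
open Finset

section Defs

variable {G : Type*} [AddGroup G] [DecidableEq G]

/-- The multiset of internal differences `x - y` (`x ≠ y`) of a finset. -/
def intDiff (D : Finset G) : Multiset G :=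
  ((D ×ˢ D).filter fun p => p.1 ≠ p.2).val.map fun p => p.1 - p.2

/-- The multiset of external differences `x - y`, `x ∈ D₁`, `y ∈ D₂`. -/
def extDiff (D₁ D₂ : Finset G) : Multiset G :=
  (D₁ ×ˢ D₂).val.map fun p => p.1 - p.2

variable {ι : Type*} [Fintype ι] [DecidableEq ι]

/-- The multiset of all internal differences of a family of sets. -/
def famInt (D : ι → Finset G) : Multiset G := ∑ i, intDiff (D i)

/-- The multiset of all external differences between distinct members of a family of sets. -/
def famExt (D : ι → Finset G) : Multiset G :=
  ∑ i, ∑ j, if j = i then 0 else extDiff (D i) (D j)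

/-- The union of the members of a family of sets. -/
def famU (D : ι → Finset G) : Finset G := Finset.univ.biUnion D

variable [Fintype G]

/-- `D` is an `(n,k,λ)`-difference set: `Δ(D) = λ(G*)`. -/
def IsDS (n k : ℕ) (lam : ℤ) (D : Finset G) : Prop :=
  Fintype.card G = n ∧ D.card = k ∧
    ∀ x : G, ((intDiff D).count x : ℤ) = if x = 0 then 0 else lam

/-- `P` is an `(n,k,λ,μ)`-partial difference set: `Δ(P) = λ(P) + μ(G* \ P)`. -/
def IsPDS (n k : ℕ) (lam mu : ℤ) (P : Finset G) : Prop :=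
  Fintype.card G = n ∧ P.card = k ∧
    ∀ x : G, ((intDiff P).count x : ℤ) =
      if x ∈ P then lam else if x = 0 then 0 else mu

/-- `D` is a family of `m` pairwise disjoint `k`-subsets of a group of order `n`. -/
def FamShape (n m k : ℕ) (D : ι → Finset G) : Prop :=
  Fintype.card G = n ∧ Fintype.card ι = m ∧ (∀ i, (D i).card = k) ∧
    ∀ i j, i ≠ j → Disjoint (D i) (D j)

/-- `(n,m,k,λ)`-disjoint difference family: `⋃ᵢ Δ(Dᵢ) = λ(G*)`. -/
def IsDDF (n m k : ℕ) (lam : ℤ) (D : ι → Finset G) : Prop :=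
  FamShape n m k D ∧
    ∀ x : G, ((famInt D).count x : ℤ) = if x = 0 then 0 else lam

/-- `(n,m,k,λ)`-external difference family: `⋃_{i≠j} Δ(Dᵢ,Dⱼ) = λ(G*)`. -/
def IsEDF (n m k : ℕ) (lam : ℤ) (D : ι → Finset G) : Prop :=
  FamShape n m k D ∧
    ∀ x : G, ((famExt D).count x : ℤ) = if x = 0 then 0 else lam

/-- `(n,m,k,λ,μ)`-disjoint partial difference family:
sets in `G*`, `⋃ᵢ Δ(Dᵢ) = λ(S) + μ(G* \ S)` where `S = ⋃ᵢ Dᵢ`. -/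
def IsDPDF (n m k : ℕ) (lam mu : ℤ) (D : ι → Finset G) : Prop :=
  FamShape n m k D ∧ (∀ i, (0 : G) ∉ D i) ∧
    ∀ x : G, ((famInt D).count x : ℤ) =
      if x ∈ famU D then lam else if x = 0 then 0 else mu

/-- `(n,m,k,λ,μ)`-external partial difference family:
sets in `G*`, `⋃_{i≠j} Δ(Dᵢ,Dⱼ) = λ(S) + μ(G* \ S)` where `S = ⋃ᵢ Dᵢ`. -/
def IsEPDF (n m k : ℕ) (lam mu : ℤ) (D : ι → Finset G) : Prop :=
  FamShape n m k D ∧ (∀ i, (0 : G) ∉ D i) ∧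
    ∀ x : G, ((famExt D).count x : ℤ) =
      if x ∈ famU D then lam else if x = 0 then 0 else mu

end Defs

section FieldDefs

variable {F : Type*} [Field F] [DecidableEq F]

/-- `α` is a primitive element: every nonzero element is a power of `α`. -/
def IsPrimitiveElt (α : F) : Prop := ∀ x : F, x ≠ 0 → ∃ k : ℕ, x = α ^ k

/-- The coset `α^i⟨α^e⟩` of the cyclotomic class of order `e` (of size `f`). -/
def cyclo (α : F) (e f i : ℕ) : Finset F :=
  (Finset.range f).image fun j => α ^ (i + e * j)

/-- The cyclotomic number `(i,j)_e`: the number of pairs `(zᵢ, zⱼ) ∈ Cᵢ × Cⱼ` with `zᵢ + 1 = zⱼ`. -/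
def cycNum (α : F) (e f i j : ℕ) : ℕ :=
  ((cyclo α e f i ×ˢ cyclo α e f j).filter fun p => p.1 + 1 = p.2).card

/-- `Φᵢ = {x ∈ C₀^e : x ≠ 1, x - 1 ∈ α^i C₀^ε}`. -/
def Phi (α : F) (e f ε ρ i : ℕ) : Finset F :=
  (cyclo α e f 0).filter fun x => x ≠ 1 ∧ x - 1 ∈ cyclo α ε ρ i

/-- `φᵢ = |Φᵢ|`. -/
def phi (α : F) (e f ε ρ i : ℕ) : ℕ := (Phi α e f ε ρ i).card

end FieldDefs

/-!
If the sets `Dᵢ` are pairwise disjoint with union `S`, every difference of two distinct elements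
of `S` is either an internal difference of one `Dᵢ` or an external difference between two of them:
`Δ(S) = ⋃ᵢ Δ(Dᵢ) + ⋃_{i≠j} Δ(Dᵢ,Dⱼ)`. When `S` is a PDS, `Δ(S) = σ(S) + μ(G* \ S)`, and since
`0 ∉ S` this weight is the sum of `λ(G*)` and `(σ-λ)(S) + (μ-λ)(G* \ S)`. Hence the external part
is `λ(G*)` exactly when the internal part is `(σ-λ)(S) + (μ-λ)(G* \ S)`, and `σ ≠ μ` makes the
latter family proper.
-/

open Function

lemma Finset.map_val_biUnion {α β κ : Type*} [DecidableEq α] {s : Finset κ}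
    {t : κ → Finset α} (ht : (s : Set κ).PairwiseDisjoint t) (f : α → β) :
    (s.biUnion t).val.map f = ∑ i ∈ s, (t i).val.map f := by
  rw [← disjiUnion_eq_biUnion s t ht, disjiUnion_val, Multiset.map_bind]
  rfl

lemma Finset.filter_ne_product_eq_of_disjoint {α : Type*} [DecidableEq α] {A B : Finset α}
    (h : Disjoint A B) :
    (A ×ˢ B).filter (fun p => p.1 ≠ p.2) = A ×ˢ B :=
  filter_true_of_mem fun _ hp =>
    (ne_of_mem_of_not_mem (mem_product.mp hp).2 (disjoint_left.mp h (mem_product.mp hp).1)).symm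

lemma intDiff_famU {G ι : Type*} [AddGroup G] [DecidableEq G] [Fintype ι] [DecidableEq ι]
    {D : ι → Finset G} (hD : Pairwise (Disjoint on D)) :
    intDiff (famU D) = famInt D + famExt D := by
  have hprod : famU D ×ˢ famU D = (univ : Finset (ι × ι)).biUnion fun ij => D ij.1 ×ˢ D ij.2 := by
    ext; simp [famU]
  have hpw : ((univ : Finset (ι × ι)) : Set (ι × ι)).PairwiseDisjoint
      fun ij => (D ij.1 ×ˢ D ij.2).filter fun p => p.1 ≠ p.2 := by
    rintro ⟨i, j⟩ - ⟨i', j'⟩ - hne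
    refine Disjoint.mono (filter_subset _ _) (filter_subset _ _) (disjoint_product.mpr ?_)
    by_cases hi : i = i'
    · exact Or.inr (hD fun hj => hne (Prod.ext hi hj))
    · exact Or.inl (hD hi)
  have hpair : ∀ i j, ((D i ×ˢ D j).filter fun p => p.1 ≠ p.2).val.map (fun p => p.1 - p.2) =
      (if j = i then intDiff (D i) else 0) + (if j = i then 0 else extDiff (D i) (D j)) := by
    intro i j
    split_ifs with h
    · subst h
      rw [add_zero]
      rfl
    · rw [filter_ne_product_eq_of_disjoint (hD (Ne.symm h)), zero_add]
      rfl
  rw [intDiff, hprod, filter_biUnion, Finset.map_val_biUnion hpw, ← univ_product_univ, sum_product,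
    famInt, famExt, ← sum_add_distrib]
  refine sum_congr rfl fun i _ => ?_
  simp only [hpair, sum_add_distrib, sum_ite_eq', mem_univ, if_true]

lemma ite_mem_ite_zero_eq_ite_zero_add {G : Type*} [Zero G] [DecidableEq G] {S : Finset G}
    (h0 : (0 : G) ∉ S) (sigma mu lam : ℤ) (x : G) :
    (if x ∈ S then sigma else if x = 0 then 0 else mu) =
      (if x = 0 then 0 else lam) +
        if x ∈ S then sigma - lam else if x = 0 then 0 else mu - lam := by
  by_cases hx : x ∈ S
  · simp [hx, ne_of_mem_of_not_mem hx h0]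
  · split_ifs <;> ring

/-- Theorem: if a proper `(n, m*k, σ, μ)`-PDS is partitioned by a family of `m` pairwise
disjoint `k`-subsets of `G*`, then the family is an `(n,m,k,λ)`-EDF iff it is a proper
`(n,m,k,σ-λ,μ-λ)`-DPDF. -/
theorem pds_partition_edf_iff_proper_dpdf {G : Type*} [AddGroup G] [DecidableEq G] [Fintype G]
    (n m k : ℕ) (sigma mu lam : ℤ) (D : Fin m → Finset G)
    (hdisj : ∀ i j, i ≠ j → Disjoint (D i) (D j))
    (hcard : ∀ i, (D i).card = k)
    (hzero : ∀ i, (0 : G) ∉ D i)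
    (hproper : sigma ≠ mu)
    (hPDS : IsPDS n (m * k) sigma mu (famU D)) :
    IsEDF n m k lam D ↔
      (IsDPDF n m k (sigma - lam) (mu - lam) D ∧ sigma - lam ≠ mu - lam) := by
  have hshape : FamShape n m k D := ⟨hPDS.1, Fintype.card_fin m, hcard, hdisj⟩
  have hzeroU : (0 : G) ∉ famU D := by simpa [famU] using hzero
  have hsplit (x : G) : ((famInt D).count x : ℤ) + (famExt D).count x =
      (if x = 0 then 0 else lam) +
        if x ∈ famU D then sigma - lam else if x = 0 then 0 else mu - lam := by
    rw [← ite_mem_ite_zero_eq_ite_zero_add hzeroU, ← hPDS.2.2 x, intDiff_famU hdisj,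
      Multiset.count_add, Nat.cast_add]
  have hproper_sub : sigma - lam ≠ mu - lam := sub_left_injective.ne hproper
  rw [and_iff_left hproper_sub]
  simp only [IsEDF, IsDPDF, hshape, hzero, true_and, not_false_eq_true, implies_true]
  exact forall_congr' fun x => by constructor <;> intro h <;> linarith [hsplit x]
end

section
/- Let G be a group of order n and let S' = {D₁, …, D_r} be a family of pairwise disjoint k-subsets of G* such that each Dᵢ is an (n, k, λ, μ)-partial difference set; set S = ⋃ᵢ Dᵢ. If any of the following hold: (i) G \ S is a difference set; (ii) G \ S is a proper partial difference set; (iii) G* \ S is a proper partial difference set; then S' is a disjoint partial difference family which is also an external partial difference family (for suitable parameters). -/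
open Finset

/-! For a pairwise disjoint family with union `S`, every difference of two distinct elements of
`S` is either internal to one member or external between two members, so the external counts are
those of `Δ(S)` minus the internal ones. The internal counts take one value on `S` and one on
`G* \ S`, since each member is a PDS and each `x ∈ S` lies in exactly one member. It remains to
see that the counts of `Δ(S)` are two-valued in the same way. Complementation in `G` preserves this
(inclusion–exclusion), which settles cases (i) and (ii). In case (iii), a proper PDS is symmetric
(`x` and `-x` have equally many representations), hence so is `S`, and then removing `0` from
`G \ (G* \ S) = S ∪ {0}` lowers the counts on `S` by `2` and leaves those off `S` unchanged. -/

section Differences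

variable {G : Type*} [AddGroup G] [DecidableEq G]

theorem count_extDiff (A B : Finset G) (x : G) :
    (extDiff A B).count x = #{b ∈ B | x + b ∈ A} := by
  rw [extDiff, Multiset.count_map, ← filter_val, ← card_def]
  refine card_bij' (fun p _ => p.2) (fun b _ => (x + b, b)) ?_ ?_ ?_ ?_ <;>
    simp +contextual [eq_sub_iff_add_eq]

theorem count_intDiff_of_ne_zero (T : Finset G) {x : G} (hx : x ≠ 0) :
    (intDiff T).count x = #{b ∈ T | x + b ∈ T} := by
  rw [← count_extDiff]
  simp only [intDiff, extDiff, Multiset.count_map, ← filter_val, ← card_def,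
    filter_filter]
  congr 1
  refine filter_congr fun p _ => and_iff_right_of_imp ?_
  intro hx' hp
  exact hx (by rw [hx', hp, sub_self])

theorem count_intDiff_zero (T : Finset G) : (intDiff T).count 0 = 0 := by
  simp [intDiff, sub_eq_zero]

theorem count_intDiff_neg (T : Finset G) (x : G) :
    (intDiff T).count (-x) = (intDiff T).count x := by
  rcases eq_or_ne x 0 with rfl | hx
  · rw [neg_zero]
  rw [count_intDiff_of_ne_zero T hx, count_intDiff_of_ne_zero T (neg_ne_zero.mpr hx)]
  exact card_equiv (Equiv.addLeft (-x)) (by simp [and_comm])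

theorem count_intDiff_insert_zero {S : Finset G} (hS : (0 : G) ∉ S) {x : G} (hx : x ≠ 0) :
    (intDiff (insert 0 S)).count x =
      (intDiff S).count x + (if x ∈ S then 1 else 0) + (if -x ∈ S then 1 else 0) := by
  rw [count_intDiff_of_ne_zero _ hx, count_intDiff_of_ne_zero _ hx]
  have hdisj : Disjoint {b ∈ S | x + b ∈ S} {b ∈ S | b = -x} := by
    simp only [disjoint_left, mem_filter]
    rintro _ ⟨-, h⟩ ⟨-, rfl⟩
    exact hS (by rwa [add_neg_cancel] at h)
  have hcard :
      #{b ∈ S | x + b ∈ insert 0 S} = #{b ∈ S | x + b ∈ S} + if -x ∈ S then 1 else 0 := by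
    have hsplit :
        {b ∈ S | x + b ∈ insert 0 S} = {b ∈ S | x + b ∈ S} ∪ {b ∈ S | b = -x} := by
      ext b
      simp only [mem_filter, mem_union, mem_insert, add_eq_zero_iff_eq_neg']
      tauto
    rw [hsplit, card_union_of_disjoint hdisj, filter_eq']
    split_ifs <;> simp
  rw [filter_insert, add_zero]
  by_cases hxS : x ∈ S
  · rw [if_pos (mem_insert_of_mem hxS), card_insert_of_notMem fun h => hS (mem_filter.1 h).1,
      hcard, if_pos hxS]
    ring
  · rw [if_neg (by simp [hx, hxS]), hcard, if_neg hxS, add_zero]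

theorem count_intDiff_compl [Fintype G] (T : Finset G) {x : G} (hx : x ≠ 0) :
    (intDiff (univ \ T)).count x + 2 * #T = (intDiff T).count x + Fintype.card G := by
  rw [count_intDiff_of_ne_zero _ hx, count_intDiff_of_ne_zero _ hx]
  set U : Finset G := {b | x + b ∈ T}
  have hU : #U = #T := card_equiv (Equiv.addLeft x) (by simp [U])
  have hcompl : {b ∈ univ \ T | x + b ∈ univ \ T} = univ \ (T ∪ U) := by ext; simp [U]
  have hinter : {b ∈ T | x + b ∈ T} = T ∩ U := by ext; simp [U]
  rw [hcompl, hinter, card_univ_sdiff]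
  have := card_union_add_card_inter T U
  have := card_le_univ (T ∪ U)
  omega

end Differences

section PDSCounts

variable {G : Type*} [AddGroup G] [DecidableEq G]

/-- The condition of `IsPDS` at the nonzero elements only; unlike `IsPDS` it survives passing to
complements, which contain `0`. -/
def HasPDSCounts (P : Finset G) (a b : ℤ) : Prop :=
  ∀ x, x ≠ 0 → ((intDiff P).count x : ℤ) = if x ∈ P then a else b

variable {P S : Finset G} {a b : ℤ}

namespace HasPDSCounts

theorem neg_mem (h : HasPDSCounts P a b) (hab : a ≠ b) {x : G} (hx : x ∈ P) : -x ∈ P := by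
  by_contra hneg
  have hx0 : x ≠ 0 := by rintro rfl; exact hneg (by rwa [neg_zero])
  have hcount := h (-x) (neg_ne_zero.mpr hx0)
  rw [count_intDiff_neg, h x hx0, if_pos hx, if_neg hneg] at hcount
  exact hab hcount

theorem of_insert_zero (h : HasPDSCounts (insert 0 S) a b) (h0 : (0 : G) ∉ S)
    (hneg : ∀ x ∈ S, -x ∈ S) : HasPDSCounts S (a - 2) b := by
  intro x hx
  have hcount : ((intDiff (insert 0 S)).count x : ℤ) = (intDiff S).count x
      + (if x ∈ S then 1 else 0 : ℕ) + (if -x ∈ S then 1 else 0 : ℕ) := by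
    exact_mod_cast count_intDiff_insert_zero h0 hx
  rw [h x hx] at hcount
  by_cases hxS : x ∈ S
  · simp only [hxS, hneg x hxS, mem_insert, or_true, if_true] at hcount ⊢
    omega
  · have hnxS : -x ∉ S := fun hn => hxS (by simpa using hneg _ hn)
    simp [hxS, hnxS, hx] at hcount ⊢
    omega

variable [Fintype G]

theorem compl (h : HasPDSCounts P a b) :
    HasPDSCounts (univ \ P) (b + Fintype.card G - 2 * #P) (a + Fintype.card G - 2 * #P) := by
  intro x hx
  have hcount : ((intDiff (univ \ P)).count x : ℤ) + 2 * #P =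
      (intDiff P).count x + Fintype.card G := by
    exact_mod_cast count_intDiff_compl P hx
  have hP := h x hx
  by_cases hxP : x ∈ P
  · rw [if_pos hxP] at hP
    rw [if_neg (by simp [hxP])]
    omega
  · rw [if_neg hxP] at hP
    rw [if_pos (by simp [hxP])]
    omega

theorem of_compl (h : HasPDSCounts (univ \ S) a b) :
    HasPDSCounts S (b + Fintype.card G - 2 * #(univ \ S))
      (a + Fintype.card G - 2 * #(univ \ S)) := by
  simpa using h.compl

theorem of_compl_erase_zero (h : HasPDSCounts (univ.erase 0 \ S) a b) (hab : a ≠ b)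
    (h0 : (0 : G) ∉ S) :
    HasPDSCounts S (b + Fintype.card G - 2 * #(univ.erase 0 \ S) - 2)
      (a + Fintype.card G - 2 * #(univ.erase 0 \ S)) := by
  have hcompl : univ.erase 0 \ S = univ \ insert 0 S := by ext; simp [and_comm]
  rw [hcompl] at h ⊢
  refine h.of_compl.of_insert_zero h0 fun x hx => ?_
  by_contra hneg
  have hx0 : x ≠ 0 := by rintro rfl; exact h0 hx
  have hnx : -x ∈ univ \ insert 0 S := by simp [hneg, hx0]
  simpa [hx] using h.neg_mem hab hnx

end HasPDSCounts

theorem IsPDS.hasPDSCounts [Fintype G] {n k : ℕ} (h : IsPDS n k a b P) : HasPDSCounts P a b :=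
  fun x hx => by simpa [hx] using h.2.2 x

theorem IsDS.hasPDSCounts [Fintype G] {n k : ℕ} (h : IsDS n k a P) : HasPDSCounts P a a :=
  fun x hx => by simpa [hx] using h.2.2 x

end PDSCounts

section Families

variable {G : Type*} [AddGroup G] [DecidableEq G] {ι : Type*} [Fintype ι] {D : ι → Finset G}
  {lam mu : ℤ}

omit [AddGroup G] in
theorem mem_famU {x : G} : x ∈ famU D ↔ ∃ i, x ∈ D i := by
  simp [famU]

omit [AddGroup G] in
theorem ite_mem_famU {M : Type*} [AddCommMonoid M]
    (hdisj : ∀ i j, i ≠ j → Disjoint (D i) (D j)) (y : G) (c : M) :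
    (if y ∈ famU D then c else 0) = ∑ i, if y ∈ D i then c else 0 := by
  rw [← sum_ite_eq' (famU D) y fun _ => c, famU, sum_biUnion fun i _ j _ h => hdisj i j h]
  simp only [sum_ite_eq']

theorem count_famInt (x : G) :
    (famInt D).count x = ∑ i, (intDiff (D i)).count x :=
  Multiset.count_sum'

theorem count_famInt_zero : (famInt D).count 0 = 0 := by
  simp [count_famInt, count_intDiff_zero]

theorem count_famInt_of_hasPDSCounts (hdisj : ∀ i j, i ≠ j → Disjoint (D i) (D j))
    (hPDS : ∀ i, HasPDSCounts (D i) lam mu) {x : G} (hx : x ≠ 0) :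
    ((famInt D).count x : ℤ) =
      if x ∈ famU D then lam + (Fintype.card ι - 1) * mu else Fintype.card ι * mu := by
  have hsplit : ∀ i, (if x ∈ D i then lam else mu) = mu + if x ∈ D i then lam - mu else 0 :=
    fun i => by split_ifs <;> ring
  calc ((famInt D).count x : ℤ)
      = ∑ i, (mu + if x ∈ D i then lam - mu else 0) := by
        rw [count_famInt]
        push_cast
        exact sum_congr rfl fun i _ => (hPDS i x hx).trans (hsplit i)
    _ = Fintype.card ι * mu + if x ∈ famU D then lam - mu else 0 := by
        rw [sum_add_distrib, ← ite_mem_famU hdisj, sum_const, card_univ, nsmul_eq_mul]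
    _ = _ := by split_ifs <;> ring

theorem isDPDF_of_hasPDSCounts [Fintype G] {n m k : ℕ} (hD : FamShape n m k D)
    (hzero : ∀ i, (0 : G) ∉ D i) (hPDS : ∀ i, HasPDSCounts (D i) lam mu) :
    IsDPDF n m k (lam + (m - 1) * mu) (m * mu) D := by
  refine ⟨hD, hzero, fun x => ?_⟩
  rcases eq_or_ne x 0 with rfl | hx
  · simp [count_famInt_zero, mem_famU, hzero]
  · simpa [hD.2.1, hx] using count_famInt_of_hasPDSCounts hD.2.2.2 hPDS hx

variable [DecidableEq ι]

theorem count_famExt (x : G) :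
    (famExt D).count x = ∑ i, ∑ j, if j = i then 0 else #{b ∈ D j | x + b ∈ D i} := by
  simp only [famExt, Multiset.count_sum', apply_ite, Multiset.count_zero, count_extDiff]

theorem count_famExt_zero (hdisj : ∀ i j, i ≠ j → Disjoint (D i) (D j)) :
    (famExt D).count 0 = 0 := by
  rw [count_famExt]
  refine sum_eq_zero fun i _ => sum_eq_zero fun j _ => ?_
  split_ifs with hji
  · rfl
  · simp only [zero_add, filter_mem_eq_inter, card_eq_zero, ← disjoint_iff_inter_eq_empty]
    exact hdisj j i hji

theorem count_intDiff_famU (hdisj : ∀ i j, i ≠ j → Disjoint (D i) (D j))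
    {x : G} (hx : x ≠ 0) :
    (intDiff (famU D)).count x = (famInt D).count x + (famExt D).count x := by
  have hsplit : ∀ i, #{b ∈ D i | x + b ∈ D i} +
      ∑ j, (if j = i then 0 else #{b ∈ D j | x + b ∈ D i}) =
        ∑ j, #{b ∈ D j | x + b ∈ D i} := by
    intro i
    simp only [sum_ite, sum_const_zero, zero_add, filter_ne']
    exact add_sum_erase univ (fun j => #{b ∈ D j | x + b ∈ D i}) (mem_univ i)
  calc (intDiff (famU D)).count x
      = ∑ b ∈ famU D, if x + b ∈ famU D then 1 else 0 := by
        rw [count_intDiff_of_ne_zero _ hx, card_filter]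
    _ = ∑ i, ∑ j, #{b ∈ D j | x + b ∈ D i} := by
        simp only [ite_mem_famU hdisj _ (1 : ℕ)]
        rw [famU, sum_biUnion fun i _ j _ h => hdisj i j h]
        simp only [card_filter]
        exact (sum_congr rfl fun j _ => sum_comm).trans sum_comm
    _ = (famInt D).count x + (famExt D).count x := by
        simp only [count_famInt, count_famExt, count_intDiff_of_ne_zero _ hx, ← sum_add_distrib,
          hsplit]

theorem isEPDF_of_hasPDSCounts [Fintype G] {n m k : ℕ} (hD : FamShape n m k D)
    (hzero : ∀ i, (0 : G) ∉ D i) (hPDS : ∀ i, HasPDSCounts (D i) lam mu) {A B : ℤ}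
    (hS : HasPDSCounts (famU D) A B) :
    IsEPDF n m k (A - (lam + (m - 1) * mu)) (B - m * mu) D := by
  refine ⟨hD, hzero, fun x => ?_⟩
  rcases eq_or_ne x 0 with rfl | hx
  · simp [count_famExt_zero hD.2.2.2, mem_famU, hzero]
  · have hsum : ((intDiff (famU D)).count x : ℤ) = (famInt D).count x + (famExt D).count x := by
      exact_mod_cast count_intDiff_famU hD.2.2.2 hx
    have hint := count_famInt_of_hasPDSCounts hD.2.2.2 hPDS hx
    rw [hS x hx] at hsum
    rw [hD.2.1] at hint
    split_ifs at hsum hint ⊢ <;> linarith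

end Families

/-- Theorem: let each member of a family of `r` pairwise disjoint `k`-subsets of `G*` be an
`(n,k,λ,μ)`-PDS, with union `S`.  If `G \ S` is a difference set, or `G \ S` is a proper PDS,
or `G* \ S` is a proper PDS, then the family is a DPDF which is also an EPDF
(for suitable parameters). -/
theorem pds_members_complement_gives_dpdf_epdf {G : Type*} [AddGroup G] [DecidableEq G]
    [Fintype G]
    (n r k : ℕ) (lam mu : ℤ) (D : Fin r → Finset G)
    (hdisj : ∀ i j, i ≠ j → Disjoint (D i) (D j))
    (hzero : ∀ i, (0 : G) ∉ D i)
    (hPDS : ∀ i, IsPDS n k lam mu (D i))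
    (hcase :
      (∃ k' lam', IsDS n k' lam' (Finset.univ \ famU D)) ∨
      (∃ k' a b, a ≠ b ∧ IsPDS n k' a b (Finset.univ \ famU D)) ∨
      (∃ k' a b, a ≠ b ∧ IsPDS n k' a b ((Finset.univ.erase (0 : G)) \ famU D))) :
    (∃ a b : ℤ, IsDPDF n r k a b D) ∧ (∃ a b : ℤ, IsEPDF n r k a b D) := by
  have hn : Fintype.card G = n := by
    rcases hcase with ⟨_, _, h⟩ | ⟨_, _, _, _, h⟩ | ⟨_, _, _, _, h⟩ <;> exact h.1
  have hD : FamShape n r k D := ⟨hn, Fintype.card_fin r, fun i => (hPDS i).2.1, hdisj⟩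
  have hcounts : ∀ i, HasPDSCounts (D i) lam mu := fun i => (hPDS i).hasPDSCounts
  have h0S : (0 : G) ∉ famU D := fun h0 => by
    obtain ⟨i, hi⟩ := mem_famU.mp h0
    exact hzero i hi
  obtain ⟨A, B, hS⟩ : ∃ A B, HasPDSCounts (famU D) A B := by
    rcases hcase with ⟨_, _, h⟩ | ⟨_, _, _, _, h⟩ | ⟨_, _, _, hab, h⟩
    · exact ⟨_, _, h.hasPDSCounts.of_compl⟩
    · exact ⟨_, _, h.hasPDSCounts.of_compl⟩
    · exact ⟨_, _, h.hasPDSCounts.of_compl_erase_zero hab h0S⟩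
  exact ⟨⟨_, _, isDPDF_of_hasPDSCounts hD hzero hcounts⟩,
    ⟨_, _, isEPDF_of_hasPDSCounts hD hzero hcounts hS⟩⟩
end
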